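/- arXiv:2312.14441 — 6 statements merged into one kernel-verified Lean document; each statement's English description precedes it below -/
import Mathlib

section
/- Let f(n,k) = k²((n−k+1)²−1)√(2k²−1), g(n,k) = k(k−1)(n−3k+2)(n−k)√(2k²−1), and h(n,k) = (k−1)((n−k−1)²−1)√(nk+k²) be real-valued functions of positive reals n, k. Then for any sequences (nⱼ), (kⱼ) of positive reals with kⱼ → ∞ and nⱼ/kⱼ → ∞, the ratio (f(nⱼ,kⱼ) + g(nⱼ,kⱼ) + h(nⱼ,kⱼ)) / (2√2·kⱼ³·nⱼ² + kⱼ^{3/2}·nⱼ^{5/2}) tends to 1. -/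
/-!
Since `k → ∞` and `k = o(n)`, every affine factor is equivalent to its leading monomial:
`k - 1 ~ k`, `n - c k + d ~ n`, `√(2k² - 1) ~ √2 k`, `√(nk + k²) ~ √(nk)`. Hence the kernel
and row-wise terms are each `~ √2 k³ n²` and the column-wise term is `~ k^{3/2} n^{5/2}`.
All these leading terms are eventually nonnegative, and equivalences between eventually
nonnegative functions may be added, so the whole sum is `~ D_conv`.
-/

open Filter Real Asymptotics

variable {α : Type*} {l : Filter α}

theorem Asymptotics.IsEquivalent.sqrt {u v : α → ℝ} (h : u ~[l] v) :
    (fun x => √(u x)) ~[l] fun x => √(v x) := by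
  obtain ⟨φ, hφ, huφv⟩ := h.exists_eq_mul
  rw [isEquivalent_iff_exists_eq_mul]
  refine ⟨fun x => √(φ x), by simpa using hφ.sqrt, ?_⟩
  filter_upwards [hφ.eventually (lt_mem_nhds zero_lt_one), huφv] with x hφx hux
  simp [hux, Real.sqrt_mul hφx.le]

theorem Asymptotics.IsEquivalent.add_add_of_eventually_nonneg {u v t w : α → ℝ}
    (hv : ∀ᶠ x in l, 0 ≤ v x) (hw : ∀ᶠ x in l, 0 ≤ w x) (huv : u ~[l] v) (htw : t ~[l] w) :
    u + t ~[l] v + w := by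
  have hv' : v =ᶠ[l] fun x => max (v x) 0 := hv.mono fun x hx => (max_eq_left hx).symm
  have hw' : w =ᶠ[l] fun x => max (w x) 0 := hw.mono fun x hx => (max_eq_left hx).symm
  exact ((huv.congr_right hv').add_add_of_nonneg (fun _ => le_max_right _ _)
    (fun _ => le_max_right _ _) (htw.congr_right hw')).congr_right (hv'.add hw').symm

theorem Asymptotics.IsEquivalent.sub_const_of_norm_tendsto_atTop {u v : α → ℝ} {c : ℝ}
    (huv : u ~[l] v) (hv : Tendsto (norm ∘ v) l atTop) :
    (u · - c) ~[l] v := by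
  simpa only [sub_eq_add_neg] using huv.add_const_of_norm_tendsto_atTop (c := -c) hv

theorem Asymptotics.IsEquivalent.sq_sub_one {u v : α → ℝ} (h : u ~[l] v)
    (hv : Tendsto (norm ∘ v) l atTop) : (fun x => u x ^ 2 - 1) ~[l] fun x => v x ^ 2 := by
  refine (h.pow 2).sub_const_of_norm_tendsto_atTop ?_
  simpa [Function.comp_def] using (tendsto_pow_atTop two_ne_zero).comp hv

theorem Asymptotics.IsLittleO.tendsto_norm_atTop {u v : α → ℝ} (h : u =o[l] v)
    (hu : Tendsto (norm ∘ u) l atTop) : Tendsto (norm ∘ v) l atTop :=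
  tendsto_atTop_mono' l ((h.bound one_pos).mono fun _ hx => by simpa using hx) hu

theorem Asymptotics.isLittleO_of_tendsto_div_atTop {u v : α → ℝ}
    (h : Tendsto (fun x => v x / u x) l atTop) : u =o[l] v := by
  rw [isLittleO_iff_tendsto' ((h.eventually_gt_atTop 0).mono fun x hx hv => by simp [hv] at hx)]
  exact h.inv_tendsto_atTop.congr fun x => inv_div _ _

theorem mul_sq_mul_sqrt_mul_eq_rpow {n k : ℝ} (hn : 0 ≤ n) (hk : 0 ≤ k) :
    k * n ^ 2 * √(n * k) = k ^ ((3 : ℝ) / 2) * n ^ ((5 : ℝ) / 2) := by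
  rw [show (3 : ℝ) / 2 = 1 + 1 / 2 by norm_num, show (5 : ℝ) / 2 = 2 + 1 / 2 by norm_num,
    Real.rpow_add' hk (by norm_num), Real.rpow_add' hn (by norm_num), Real.rpow_one,
    Real.rpow_two, Real.sqrt_mul hn, Real.sqrt_eq_rpow, Real.sqrt_eq_rpow]
  ring

noncomputable def kernelReuseDMC (n k : ℝ) : ℝ := k ^ 2 * ((n - k + 1) ^ 2 - 1) * √(2 * k ^ 2 - 1)

noncomputable def rowReuseDMC (n k : ℝ) : ℝ :=
  k * (k - 1) * (n - 3 * k + 2) * (n - k) * √(2 * k ^ 2 - 1)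

noncomputable def columnReuseDMC (n k : ℝ) : ℝ :=
  (k - 1) * ((n - k - 1) ^ 2 - 1) * √(n * k + k ^ 2)

noncomputable def convDMC (n k : ℝ) : ℝ :=
  2 * √2 * k ^ 3 * n ^ 2 + k ^ ((3 : ℝ) / 2) * n ^ ((5 : ℝ) / 2)

section

variable {n k : α → ℝ}

theorem sub_const_mul_add_const_isEquivalent (hkn : k =o[l] n) (hn : Tendsto (norm ∘ n) l atTop)
    (c d : ℝ) : (fun x => n x - c * k x + d) ~[l] n :=
  (IsEquivalent.refl.sub_isLittleO (hkn.const_mul_left c)).add_const_of_norm_tendsto_atTop hn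

theorem sqrt_two_mul_sq_sub_one_isEquivalent (hk : Tendsto k l atTop) :
    (fun x => √(2 * k x ^ 2 - 1)) ~[l] fun x => √2 * k x := by
  have hsq : (fun x => 2 * k x ^ 2 - 1) ~[l] fun x => 2 * k x ^ 2 := by
    refine IsEquivalent.refl.sub_const_of_norm_tendsto_atTop (tendsto_norm_atTop_atTop.comp ?_)
    exact ((tendsto_pow_atTop two_ne_zero).comp hk).const_mul_atTop two_pos
  refine hsq.sqrt.congr_right ?_
  filter_upwards [hk.eventually_ge_atTop 0] with x hx
  rw [Real.sqrt_mul zero_le_two, Real.sqrt_sq hx]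

theorem kernelReuseDMC_isEquivalent (hk : Tendsto k l atTop) (hkn : k =o[l] n) :
    (fun x => kernelReuseDMC (n x) (k x)) ~[l] fun x => √2 * k x ^ 3 * n x ^ 2 := by
  have hn := hkn.tendsto_norm_atTop (tendsto_norm_atTop_atTop.comp hk)
  have h1 : (fun x => (n x - k x + 1) ^ 2 - 1) ~[l] fun x => n x ^ 2 :=
    IsEquivalent.sq_sub_one (by simpa using sub_const_mul_add_const_isEquivalent hkn hn 1 1) hn
  refine ((IsEquivalent.refl.mul h1).mul (sqrt_two_mul_sq_sub_one_isEquivalent hk)).congr_right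
    (Eventually.of_forall fun x => ?_)
  simp only [Pi.mul_apply]
  ring

theorem rowReuseDMC_isEquivalent (hk : Tendsto k l atTop) (hkn : k =o[l] n) :
    (fun x => rowReuseDMC (n x) (k x)) ~[l] fun x => √2 * k x ^ 3 * n x ^ 2 := by
  have hk' := tendsto_norm_atTop_atTop.comp hk
  have hn := hkn.tendsto_norm_atTop hk'
  have h1 : (fun x => k x - 1) ~[l] k := IsEquivalent.refl.sub_const_of_norm_tendsto_atTop hk'
  have h2 : (fun x => n x - 3 * k x + 2) ~[l] n := sub_const_mul_add_const_isEquivalent hkn hn 3 2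
  have h3 : (fun x => n x - k x) ~[l] n := by
    simpa using sub_const_mul_add_const_isEquivalent hkn hn 1 0
  refine ((((IsEquivalent.refl.mul h1).mul h2).mul h3).mul
    (sqrt_two_mul_sq_sub_one_isEquivalent hk)).congr_right (Eventually.of_forall fun x => ?_)
  simp only [Pi.mul_apply]
  ring

theorem columnReuseDMC_isEquivalent (hk : Tendsto k l atTop) (hkn : k =o[l] n)
    (hn : ∀ᶠ x in l, 0 ≤ n x) :
    (fun x => columnReuseDMC (n x) (k x)) ~[l]
      fun x => k x ^ ((3 : ℝ) / 2) * n x ^ ((5 : ℝ) / 2) := by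
  have hk' := tendsto_norm_atTop_atTop.comp hk
  have hn' := hkn.tendsto_norm_atTop hk'
  have hk0 := hk.eventually_ge_atTop 0
  have h1 : (fun x => k x - 1) ~[l] k := IsEquivalent.refl.sub_const_of_norm_tendsto_atTop hk'
  have h2 : (fun x => (n x - k x - 1) ^ 2 - 1) ~[l] fun x => n x ^ 2 :=
    IsEquivalent.sq_sub_one
      (by simpa [← sub_eq_add_neg] using sub_const_mul_add_const_isEquivalent hkn hn' 1 (-1)) hn'
  have h3 : (fun x => √(n x * k x + k x ^ 2)) ~[l] fun x => √(n x * k x) := by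
    refine IsEquivalent.sqrt (IsEquivalent.refl.add_isLittleO ?_)
    simpa only [sq] using hkn.mul_isBigO (isBigO_refl k l)
  refine ((h1.mul h2).mul h3).congr_right ?_
  filter_upwards [hn, hk0] with x hnx hkx
  exact mul_sq_mul_sqrt_mul_eq_rpow hnx hkx

theorem reuseDMC_isEquivalent_convDMC (hk : Tendsto k l atTop) (hkn : k =o[l] n)
    (hn : ∀ᶠ x in l, 0 ≤ n x) :
    (fun x => kernelReuseDMC (n x) (k x) + rowReuseDMC (n x) (k x) + columnReuseDMC (n x) (k x))
      ~[l] fun x => convDMC (n x) (k x) := by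
  have hk0 := hk.eventually_ge_atTop 0
  have hA : ∀ᶠ x in l, 0 ≤ √2 * k x ^ 3 * n x ^ 2 := hk0.mono fun x hx => by positivity
  have hB : ∀ᶠ x in l, 0 ≤ k x ^ ((3 : ℝ) / 2) * n x ^ ((5 : ℝ) / 2) := by
    filter_upwards [hn, hk0] with x hnx hkx
    positivity
  refine ((kernelReuseDMC_isEquivalent hk hkn).add_add_of_eventually_nonneg hA hA
    (rowReuseDMC_isEquivalent hk hkn)).add_add_of_eventually_nonneg
    (hA.mono fun x hx => add_nonneg hx hx) hB (columnReuseDMC_isEquivalent hk hkn hn)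
    |>.congr_right (Eventually.of_forall fun x => ?_)
  simp only [Pi.add_apply, convDMC]
  ring

end

theorem dmc_conv_asymptotic_general
    (n k : ℕ → ℝ)
    (hk_top : Tendsto k atTop atTop)
    (hnk_top : Tendsto (fun j => n j / k j) atTop atTop) :
    Tendsto (fun j =>
      ((k j) ^ 2 * ((n j - k j + 1) ^ 2 - 1) * Real.sqrt (2 * (k j) ^ 2 - 1)
        + (k j) * (k j - 1) * (n j - 3 * k j + 2) * (n j - k j) * Real.sqrt (2 * (k j) ^ 2 - 1)
        + (k j - 1) * ((n j - k j - 1) ^ 2 - 1) * Real.sqrt (n j * k j + (k j) ^ 2))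
      / (2 * Real.sqrt 2 * (k j) ^ 3 * (n j) ^ 2
          + (k j) ^ ((3 : ℝ) / 2) * (n j) ^ ((5 : ℝ) / 2)))
      atTop (nhds 1) := by
  have hk0 : ∀ᶠ j in atTop, 0 < k j := hk_top.eventually_gt_atTop 0
  have hn0 : ∀ᶠ j in atTop, 0 < n j := by
    filter_upwards [hk0, hnk_top.eventually_gt_atTop 0] with j hkj hnkj
    exact (div_pos_iff_of_pos_right hkj).1 hnkj
  have hconv : ∀ᶠ j in atTop, convDMC (n j) (k j) ≠ 0 := by
    filter_upwards [hn0, hk0] with j hnj hkj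
    unfold convDMC
    positivity
  exact (isEquivalent_iff_tendsto_one hconv).mp <| reuseDMC_isEquivalent_convDMC hk_top
    (isLittleO_of_tendsto_div_atTop hnk_top) (hn0.mono fun _ => le_of_lt)

/-- In the DMC analysis of spatial convolution, the sum of the kernel-reuse,
row-wise-reuse and column-wise-reuse costs is asymptotically equivalent to
`2√2·k³·n² + k^{3/2}·n^{5/2}` in the regime `k → ∞`, `n/k → ∞`. -/
theorem dmc_conv_asymptotic
    (n k : ℕ → ℝ) (hn : ∀ j, 0 < n j) (hk : ∀ j, 0 < k j)
    (hk_top : Tendsto k atTop atTop)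
    (hnk_top : Tendsto (fun j => n j / k j) atTop atTop) :
    Tendsto (fun j =>
      ((k j) ^ 2 * ((n j - k j + 1) ^ 2 - 1) * Real.sqrt (2 * (k j) ^ 2 - 1)
        + (k j) * (k j - 1) * (n j - 3 * k j + 2) * (n j - k j) * Real.sqrt (2 * (k j) ^ 2 - 1)
        + (k j - 1) * ((n j - k j - 1) ^ 2 - 1) * Real.sqrt (n j * k j + (k j) ^ 2))
      / (2 * Real.sqrt 2 * (k j) ^ 3 * (n j) ^ 2
          + (k j) ^ ((3 : ℝ) / 2) * (n j) ^ ((5 : ℝ) / 2)))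
      atTop (nhds 1) :=
  dmc_conv_asymptotic_general n k hk_top hnk_top
end

section
/- Let k ≥ 1 be a fixed real number, D_conv(n,k) = 2√2·k³·n² + k^{3/2}·n^{5/2}, and D_im2col(n,k) = 2√2·k³·n² + k^{3/2}·n^{5/2} + k·n³. Then the limit as n → ∞ of (D_im2col(n,k) / D_conv(n,k)) · √(k/n) equals 1; that is, im2col incurs asymptotically a factor of √(n/k) more data movement than spatial convolution. -/
open Filter Real

/-- For fixed kernel size `k ≥ 1`, the ratio of the im2col DMC
`2√2·k³·n² + k^{3/2}·n^{5/2} + k·n³` to the spatial-convolution DMC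
`2√2·k³·n² + k^{3/2}·n^{5/2}`, scaled by `√(k/n)`, tends to 1 as `n → ∞`;
i.e. im2col incurs asymptotically a factor `√(n/k)` more data movement. -/
theorem dmc_im2col_over_conv (k : ℝ) (hk : 1 ≤ k) :
    Tendsto (fun n : ℝ =>
      ((2 * Real.sqrt 2 * k ^ 3 * n ^ 2 + k ^ ((3 : ℝ) / 2) * n ^ ((5 : ℝ) / 2) + k * n ^ 3)
        / (2 * Real.sqrt 2 * k ^ 3 * n ^ 2 + k ^ ((3 : ℝ) / 2) * n ^ ((5 : ℝ) / 2)))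
        * Real.sqrt (k / n))
      atTop (nhds 1) := by
  have hk0 : (0:ℝ) < k := lt_of_lt_of_le one_pos hk
  have hk32 : (0:ℝ) < k ^ ((3:ℝ)/2) := Real.rpow_pos_of_pos hk0 _
  -- limit of the simplified function
  have hhalf : Tendsto (fun n : ℝ => n ^ (-(1/2) : ℝ)) atTop (nhds 0) :=
    tendsto_rpow_neg_atTop (by norm_num)
  have h1 : Tendsto (fun n : ℝ => Real.sqrt k * n ^ (-(1/2) : ℝ)) atTop (nhds 0) := by
    simpa using hhalf.const_mul (Real.sqrt k)
  have h2 : Tendsto (fun n : ℝ => 2 * Real.sqrt 2 * k ^ 3 * n ^ (-(1/2) : ℝ)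
      + k ^ ((3:ℝ)/2)) atTop (nhds (k ^ ((3:ℝ)/2))) := by
    have := (hhalf.const_mul (2 * Real.sqrt 2 * k ^ 3)).add_const (k ^ ((3:ℝ)/2))
    simpa using this
  have hg : Tendsto (fun n : ℝ => Real.sqrt k * n ^ (-(1/2) : ℝ)
      + k ^ ((3:ℝ)/2) / (2 * Real.sqrt 2 * k ^ 3 * n ^ (-(1/2) : ℝ) + k ^ ((3:ℝ)/2)))
      atTop (nhds 1) := by
    have hdiv := (tendsto_const_nhds (x := k ^ ((3:ℝ)/2))).div h2 hk32.ne'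
    have := h1.add hdiv
    simpa [div_self hk32.ne'] using this
  refine hg.congr' ?_
  filter_upwards [eventually_ge_atTop (1:ℝ)] with n hn
  have hn0 : (0:ℝ) < n := lt_of_lt_of_le one_pos hn
  have hsn : (0:ℝ) < Real.sqrt n := Real.sqrt_pos.mpr hn0
  have hsk : (0:ℝ) < Real.sqrt k := Real.sqrt_pos.mpr hk0
  have h2p : (0:ℝ) < Real.sqrt 2 := Real.sqrt_pos.mpr (by norm_num)
  have hkr : k ^ ((3:ℝ)/2) = k * Real.sqrt k := by
    rw [show (3:ℝ)/2 = 1 + 1/2 by norm_num, Real.rpow_add hk0, Real.rpow_one,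
      ← Real.sqrt_eq_rpow]
  have hnr : n ^ ((5:ℝ)/2) = n ^ 2 * Real.sqrt n := by
    rw [show (5:ℝ)/2 = 2 + 1/2 by norm_num, Real.rpow_add hn0, ← Real.sqrt_eq_rpow,
      Real.rpow_two]
  have hninv : n ^ (-(1/2) : ℝ) = 1 / Real.sqrt n := by
    rw [Real.rpow_neg hn0.le, ← Real.sqrt_eq_rpow, one_div]
  have hsq : Real.sqrt (k / n) = Real.sqrt k / Real.sqrt n := Real.sqrt_div hk0.le n
  rw [hkr, hnr, hninv, hsq]
  set m := Real.sqrt n with hm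
  have hn2 : n = m ^ 2 := (Real.sq_sqrt hn0.le).symm
  have hB : 2 * Real.sqrt 2 * k ^ 3 * n ^ 2 + k * Real.sqrt k * (n ^ 2 * m) ≠ 0 := by
    positivity
  have hC : 2 * Real.sqrt 2 * k ^ 3 * (1 / m) + k * Real.sqrt k ≠ 0 := by
    positivity
  rw [hn2] at hB ⊢
  field_simp
end

section
/- Let k = 3, c = x = 10, and A(n) = 54√2·n² + 3√3·n^{5/2} for a positive real n. Then for every integer n ≥ 448, the fully batched cost 10√10·A(n) is strictly less than the unbatched cost 10·A(n) + 9·n³, while for every integer n with 3 ≤ n ≤ 447 the fully batched cost is strictly greater than the unbatched cost. -/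
set_option maxHeartbeats 800000


open Real

/-- For `k = 3`, `c = x = 10` and `A(n) = 54√2·n² + 3√3·n^{5/2}`:
for every integer `n ≥ 448` the fully batched cost `10√10·A(n)` is strictly
less than the unbatched cost `10·A(n) + 9·n³`, while for `3 ≤ n ≤ 447`
it is strictly greater. -/
theorem dmc_batching_image_size_threshold :
    (∀ n : ℕ, 448 ≤ n →
      10 * Real.sqrt 10
          * (54 * Real.sqrt 2 * (n : ℝ) ^ 2 + 3 * Real.sqrt 3 * (n : ℝ) ^ ((5 : ℝ) / 2))
        < 10 * (54 * Real.sqrt 2 * (n : ℝ) ^ 2 + 3 * Real.sqrt 3 * (n : ℝ) ^ ((5 : ℝ) / 2))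
          + 9 * (n : ℝ) ^ 3) ∧
    (∀ n : ℕ, 3 ≤ n → n ≤ 447 →
      10 * (54 * Real.sqrt 2 * (n : ℝ) ^ 2 + 3 * Real.sqrt 3 * (n : ℝ) ^ ((5 : ℝ) / 2))
          + 9 * (n : ℝ) ^ 3
        < 10 * Real.sqrt 10
            * (54 * Real.sqrt 2 * (n : ℝ) ^ 2 + 3 * Real.sqrt 3 * (n : ℝ) ^ ((5 : ℝ) / 2))) := by
  have ha0 : (0:ℝ) ≤ Real.sqrt 2 := Real.sqrt_nonneg 2
  have hb0 : (0:ℝ) ≤ Real.sqrt 3 := Real.sqrt_nonneg 3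
  have hc0 : (0:ℝ) ≤ Real.sqrt 10 := Real.sqrt_nonneg 10
  have ha2 : Real.sqrt 2 ^ 2 = 2 := Real.sq_sqrt (by norm_num)
  have hb2 : Real.sqrt 3 ^ 2 = 3 := Real.sq_sqrt (by norm_num)
  have hc2 : Real.sqrt 10 ^ 2 = 10 := Real.sq_sqrt (by norm_num)
  have haU : Real.sqrt 2 ≤ 1.41422 := by nlinarith
  have haL : (1.41421:ℝ) ≤ Real.sqrt 2 := by nlinarith
  have hbU : Real.sqrt 3 ≤ 1.73206 := by nlinarith
  have hbL : (1.73205:ℝ) ≤ Real.sqrt 3 := by nlinarith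
  have hcU : Real.sqrt 10 ≤ 3.16228 := by nlinarith
  have hcL : (3.16227:ℝ) ≤ Real.sqrt 10 := by nlinarith
  -- generic rewriting helpers
  have hrw : ∀ n : ℕ, ((n:ℝ) ^ ((5:ℝ)/2) = Real.sqrt n ^ 5 ∧
      (n:ℝ) ^ 2 = Real.sqrt n ^ 4 ∧ (n:ℝ) ^ 3 = Real.sqrt n ^ 6) := by
    intro n
    have hn0 : (0:ℝ) ≤ (n:ℝ) := Nat.cast_nonneg n
    have hs2 : Real.sqrt n ^ 2 = (n:ℝ) := Real.sq_sqrt hn0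
    refine ⟨?_, by linear_combination (-(n:ℝ) - Real.sqrt n ^ 2) * hs2,
      by linear_combination (-((n:ℝ))^2 - (n:ℝ) * Real.sqrt n ^ 2 - Real.sqrt n ^ 4) * hs2⟩
    rw [Real.sqrt_eq_rpow, ← Real.rpow_natCast ((n:ℝ) ^ ((1:ℝ)/2)) 5,
      ← Real.rpow_mul hn0]
    norm_num
  constructor
  · intro n hn
    obtain ⟨h5, h2, h3⟩ := hrw n
    rw [h5, h2, h3]
    set s := Real.sqrt n with hs
    have hs2 : s ^ 2 = (n:ℝ) := Real.sq_sqrt (Nat.cast_nonneg n)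
    have hn' : (448:ℝ) ≤ (n:ℝ) := by exact_mod_cast hn
    have hsge : (21.166:ℝ) ≤ s := by
      nlinarith [Real.sqrt_nonneg (n:ℝ), hs2]
    have hs0 : (0:ℝ) < s := by linarith
    have key : (10 * Real.sqrt 10 - 10) * (54 * Real.sqrt 2 + 3 * Real.sqrt 3 * s)
        < 9 * s ^ 2 := by
      nlinarith [mul_nonneg hb0 hs0.le, sq_nonneg (s - 21.166),
        mul_nonneg (mul_nonneg hc0 hb0) hs0.le]
    have hs4 : (0:ℝ) < s ^ 4 := by positivity
    nlinarith [mul_lt_mul_of_pos_right key hs4]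
  · intro n hn3 hn
    obtain ⟨h5, h2, h3⟩ := hrw n
    rw [h5, h2, h3]
    set s := Real.sqrt n with hs
    have hs2 : s ^ 2 = (n:ℝ) := Real.sq_sqrt (Nat.cast_nonneg n)
    have hn' : (n:ℝ) ≤ 447 := by exact_mod_cast hn
    have hn3' : (3:ℝ) ≤ (n:ℝ) := by exact_mod_cast hn3
    have hsnn : (0:ℝ) ≤ s := Real.sqrt_nonneg _
    have hs0 : (0:ℝ) < s := by nlinarith
    have hsle : s ≤ (21.1425:ℝ) := by nlinarith
    have key : 9 * s ^ 2
        < (10 * Real.sqrt 10 - 10) * (54 * Real.sqrt 2 + 3 * Real.sqrt 3 * s) := by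
      nlinarith [mul_nonneg hs0.le (sub_nonneg.mpr hsle),
        mul_nonneg (mul_nonneg hc0 hb0) hs0.le, mul_nonneg hb0 hs0.le]
    have hs4 : (0:ℝ) < s ^ 4 := by positivity
    nlinarith [mul_lt_mul_of_pos_right key hs4]
end

section
/- Fix an integer k ≥ 1 and an integer c ≥ 2. Then the ratio of fully batched to unbatched convolution cost, c^{3/2}·(2√2·k³·n² + k^{3/2}·n^{5/2}) / (c·(2√2·k³·n² + k^{3/2}·n^{5/2}) + (c−1)·n³), tends to 0 as n → ∞. In particular, for all sufficiently large image sizes n, batching all channels at once is beneficial. -/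
open Filter Real

/-- For fixed integers `k ≥ 1` and `c ≥ 2`, the ratio of fully batched to
unbatched convolution DMC tends to 0 as the image size `n → ∞`: batching all
channels at once is eventually beneficial. -/
theorem dmc_batching_eventually_beneficial (k c : ℕ) (hk : 1 ≤ k) (hc : 2 ≤ c) :
    Tendsto (fun n : ℕ =>
      (c : ℝ) ^ ((3 : ℝ) / 2)
          * (2 * Real.sqrt 2 * (k : ℝ) ^ 3 * (n : ℝ) ^ 2
              + (k : ℝ) ^ ((3 : ℝ) / 2) * (n : ℝ) ^ ((5 : ℝ) / 2))
        / ((c : ℝ)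
              * (2 * Real.sqrt 2 * (k : ℝ) ^ 3 * (n : ℝ) ^ 2
                  + (k : ℝ) ^ ((3 : ℝ) / 2) * (n : ℝ) ^ ((5 : ℝ) / 2))
            + ((c : ℝ) - 1) * (n : ℝ) ^ 3))
      atTop (nhds 0) := by
  set A := (c : ℝ) ^ ((3 : ℝ) / 2) with hAdef
  set B := 2 * Real.sqrt 2 * (k : ℝ) ^ 3 with hBdef
  set K := (k : ℝ) ^ ((3 : ℝ) / 2) with hKdef
  have hA : 0 ≤ A := by positivity
  have hB : 0 ≤ B := by positivity
  have hK : 0 ≤ K := by positivity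
  have hc1 : (1 : ℝ) ≤ (c : ℝ) - 1 := by
    have : (2 : ℝ) ≤ (c : ℝ) := by exact_mod_cast hc
    linarith
  have hcpos : (0 : ℝ) ≤ (c : ℝ) := by positivity
  -- the majorant tends to 0
  have hg : Tendsto (fun n : ℕ => A * B / (n : ℝ) + A * K * (n : ℝ) ^ (-((1 : ℝ) / 2)))
      atTop (nhds 0) := by
    have h1 := tendsto_const_div_atTop_nhds_zero_nat (A * B)
    have h2 : Tendsto (fun n : ℕ => (n : ℝ) ^ (-((1 : ℝ) / 2))) atTop (nhds 0) :=
      (tendsto_rpow_neg_atTop (by norm_num)).comp tendsto_natCast_atTop_atTop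
    simpa using h1.add (h2.const_mul (A * K))
  apply squeeze_zero' (g := fun n : ℕ => A * B / (n : ℝ) + A * K * (n : ℝ) ^ (-((1 : ℝ) / 2)))
  · filter_upwards with n
    have hnum : 0 ≤ B * (n : ℝ) ^ 2 + K * (n : ℝ) ^ ((5 : ℝ) / 2) := by positivity
    apply div_nonneg (by positivity)
    have : (0 : ℝ) ≤ ((c : ℝ) - 1) * (n : ℝ) ^ 3 := by positivity
    nlinarith [mul_nonneg hcpos hnum]
  · filter_upwards [eventually_ge_atTop 1] with n hn
    have hnpos : (0 : ℝ) < (n : ℝ) := by exact_mod_cast Nat.lt_of_lt_of_le Nat.zero_lt_one hn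
    have hnum : 0 ≤ B * (n : ℝ) ^ 2 + K * (n : ℝ) ^ ((5 : ℝ) / 2) := by positivity
    have hden : (n : ℝ) ^ 3 ≤
        (c : ℝ) * (B * (n : ℝ) ^ 2 + K * (n : ℝ) ^ ((5 : ℝ) / 2)) + ((c : ℝ) - 1) * (n : ℝ) ^ 3 := by
      have h1 : 0 ≤ (c : ℝ) * (B * (n : ℝ) ^ 2 + K * (n : ℝ) ^ ((5 : ℝ) / 2)) :=
        mul_nonneg hcpos hnum
      nlinarith [pow_pos hnpos 3]
    have hn3 : (0 : ℝ) < (n : ℝ) ^ 3 := pow_pos hnpos 3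
    calc A * (B * (n : ℝ) ^ 2 + K * (n : ℝ) ^ ((5 : ℝ) / 2))
          / ((c : ℝ) * (B * (n : ℝ) ^ 2 + K * (n : ℝ) ^ ((5 : ℝ) / 2)) + ((c : ℝ) - 1) * (n : ℝ) ^ 3)
        ≤ A * (B * (n : ℝ) ^ 2 + K * (n : ℝ) ^ ((5 : ℝ) / 2)) / (n : ℝ) ^ 3 :=
          div_le_div_of_nonneg_left (by positivity) hn3 hden
      _ = A * B / (n : ℝ) + A * K * (n : ℝ) ^ (-((1 : ℝ) / 2)) := by
          have hr : (n : ℝ) ^ ((5 : ℝ) / 2) / (n : ℝ) ^ 3 = (n : ℝ) ^ (-((1 : ℝ) / 2)) := by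
            rw [← Real.rpow_natCast (n : ℝ) 3, ← Real.rpow_sub hnpos]
            norm_num
          have e1 : (n : ℝ) ^ 2 / (n : ℝ) ^ 3 = 1 / (n : ℝ) := by
            field_simp
          have : A * (B * (n : ℝ) ^ 2 + K * (n : ℝ) ^ ((5 : ℝ) / 2)) / (n : ℝ) ^ 3
              = A * B * ((n : ℝ) ^ 2 / (n : ℝ) ^ 3)
                + A * K * ((n : ℝ) ^ ((5 : ℝ) / 2) / (n : ℝ) ^ 3) := by ring
          rw [this, e1, hr]
          ring
  · exact hg
end

section
/- For an integer m ≥ 2, define S(m) = Σ_{d=2}^{m} 2^{m−d} · Σ_{a=0}^{2^{d−1}} √((2(d−1) + 3/2)·2^{d−1} + a). Then the limit as m → ∞ of S(m) / (2^{3m/2}·√m) exists and equals (2+√2)/2. In particular, writing n = 2^m, S grows asymptotically like ((2+√2)/2)·n^{3/2}·√(log₂ n). -/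
open Filter Real Finset Topology

/-! Substituting `k = m - d`, the normalised sum becomes
`∑ₖ (√2/2)^k · √((m - k)/m) · ρ(m - k)` with `ρ(d) = T(d) / (2^{3d/2} √d)` the normalised inner sum
`T(d)`. Bounding each of the `2^{d-1} + 1` summands of `T(d)` by its smallest and largest value
gives `ρ(d) → 1/2`, so the `k`-th term tends to `(√2/2)^k / 2`. As `ρ` is bounded, the terms are
dominated by a geometric series, and Tannery's theorem gives the limit
`(1/2) / (1 - √2/2) = (2 + √2)/2`. -/

theorem tendsto_tsum_geometric_mul {q L B : ℝ} (hq₀ : 0 ≤ q) (hq₁ : q < 1) {u : ℕ → ℕ → ℝ}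
    (hlim : ∀ k, Tendsto (u · k) atTop (𝓝 L)) (hbound : ∀ m k, |u m k| ≤ B) :
    Tendsto (fun m ↦ ∑' k, q ^ k * u m k) atTop (𝓝 (L / (1 - q))) := by
  have hsum : ∑' k, q ^ k * L = L / (1 - q) := by
    rw [tsum_mul_right, tsum_geometric_of_lt_one hq₀ hq₁, inv_mul_eq_div]
  rw [← hsum]
  refine tendsto_tsum_of_dominated_convergence ((summable_geometric_of_lt_one hq₀ hq₁).mul_right B)
    (fun k ↦ (hlim k).const_mul _) (Eventually.of_forall fun m k ↦ ?_)
  rw [norm_mul, norm_pow, Real.norm_of_nonneg hq₀, Real.norm_eq_abs]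
  exact mul_le_mul_of_nonneg_left (hbound m k) (pow_nonneg hq₀ k)

theorem two_rpow_three_mul_div_two (x : ℝ) : (2 : ℝ) ^ (3 * x / 2) = (2 * √2) ^ x := by
  rw [mul_div_right_comm, rpow_mul zero_le_two, show (3 : ℝ) / 2 = 1 + 1 / 2 by norm_num,
    rpow_add two_pos, rpow_one, ← sqrt_eq_rpow]

theorem sqrt_two_div_two_lt_one : √2 / 2 < 1 := by
  rw [div_lt_one two_pos, sqrt_lt' two_pos]; norm_num

theorem half_div_one_sub_sqrt_two_div_two : (1 / 2) / (1 - √2 / 2) = (2 + √2) / 2 := by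
  have h2 : √2 ^ 2 = 2 := sq_sqrt zero_le_two
  rw [div_eq_iff (by linarith [sqrt_two_div_two_lt_one])]
  nlinarith

theorem card_mul_sqrt_le_sum_sqrt_add {c : ℝ} (N : ℕ) :
    (N + 1) * √c ≤ ∑ a ∈ range (N + 1), √(c + a) := by
  simpa using card_nsmul_le_sum (range (N + 1)) (fun a : ℕ ↦ √(c + a)) √c
    fun a _ ↦ sqrt_le_sqrt (le_add_of_nonneg_right a.cast_nonneg)

theorem sum_sqrt_add_le_card_mul {c : ℝ} (N : ℕ) :
    ∑ a ∈ range (N + 1), √(c + a) ≤ (N + 1) * √(c + N) := by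
  simpa using sum_le_card_nsmul (range (N + 1)) (fun a : ℕ ↦ √(c + a)) √(c + N)
    fun a ha ↦ sqrt_le_sqrt (by simpa using Nat.lt_succ_iff.mp (mem_range.mp ha))

theorem tendsto_two_mul_add_div_add_one (δ : ℝ) :
    Tendsto (fun n : ℕ ↦ (2 * n + δ) / (n + 1)) atTop (𝓝 2) := by
  have h := (tendsto_one_div_add_atTop_nhds_zero_nat.const_mul (δ - 2)).const_add (2 : ℝ)
  rw [mul_zero, add_zero] at h
  refine h.congr fun n ↦ ?_
  field_simp
  ring

theorem sqrt_two_pow (n : ℕ) : √((2 : ℝ) ^ n) = √2 ^ n := by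
  rw [← sqrt_sq (by positivity : 0 ≤ √2 ^ n), ← pow_mul, mul_comm, pow_mul, sq_sqrt zero_le_two]

theorem pow_add_one_mul_sqrt_div_eq {δ : ℝ} (hδ : 0 ≤ δ) (n : ℕ) :
    (2 ^ n + 1) * √((2 * n + δ) * 2 ^ n) / ((2 * √2) ^ (n + 1) * √(n + 1))
      = (1 + (1 / 2) ^ n) * √((2 * n + δ) / (n + 1)) / (2 * √2) := by
  rw [sqrt_mul (by positivity), sqrt_div (by positivity), sqrt_two_pow, pow_succ, mul_pow]
  field_simp
  have : (2 : ℝ) ^ n * (1 / 2) ^ n = 1 := by rw [← mul_pow]; norm_num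
  linear_combination -√(2 * n + δ) * this

theorem tendsto_pow_add_one_mul_sqrt_div {δ : ℝ} (hδ : 0 ≤ δ) :
    Tendsto (fun n : ℕ ↦ (2 ^ n + 1) * √((2 * n + δ) * 2 ^ n) / ((2 * √2) ^ (n + 1) * √(n + 1)))
      atTop (𝓝 (1 / 2)) := by
  have hgeo := tendsto_pow_atTop_nhds_zero_of_lt_one (r := (1 / 2 : ℝ)) (by norm_num) (by norm_num)
  have h := ((hgeo.const_add 1).mul (tendsto_two_mul_add_div_add_one δ).sqrt).div_const (2 * √2)
  convert h using 1
  · exact funext (pow_add_one_mul_sqrt_div_eq hδ)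
  · rw [add_zero, one_mul, mul_comm, ← div_div, div_self (by positivity)]

theorem pow_mul_div_pow_add_mul_sqrt {d : ℕ} (hd : d ≠ 0) (k : ℕ) (x : ℝ) :
    2 ^ k * x / ((2 * √2) ^ (d + k) * √(d + k : ℕ))
      = (√2 / 2) ^ k * (√((d : ℝ) / (d + k : ℕ)) * (x / ((2 * √2) ^ d * √d))) := by
  have hd' : (0 : ℝ) < d := by positivity
  rw [sqrt_div hd'.le, pow_add, div_pow]
  field_simp
  rw [mul_assoc, ← mul_pow, mul_assoc, mul_self_sqrt zero_le_two, ← sq, ← pow_mul, ← pow_mul']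
  ring

noncomputable def dmcInner (d : ℕ) : ℝ :=
  ∑ a ∈ range (2 ^ (d - 1) + 1), √((2 * ((d : ℝ) - 1) + 3 / 2) * 2 ^ (d - 1) + (a : ℝ))

noncomputable def dmcRatio (d : ℕ) : ℝ := dmcInner d / ((2 * √2) ^ d * √d)

theorem dmcInner_succ (n : ℕ) :
    dmcInner (n + 1) = ∑ a ∈ range (2 ^ n + 1), √((2 * n + 3 / 2) * 2 ^ n + (a : ℝ)) := by
  simp only [dmcInner, Nat.add_sub_cancel, Nat.cast_add, Nat.cast_one, add_sub_cancel_right]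

theorem pow_add_one_mul_sqrt_le_dmcInner_succ (n : ℕ) :
    (2 ^ n + 1) * √((2 * n + 3 / 2) * 2 ^ n) ≤ dmcInner (n + 1) := by
  simpa [dmcInner_succ] using card_mul_sqrt_le_sum_sqrt_add (c := (2 * n + 3 / 2) * 2 ^ n) (2 ^ n)

theorem dmcInner_succ_le_pow_add_one_mul_sqrt (n : ℕ) :
    dmcInner (n + 1) ≤ (2 ^ n + 1) * √((2 * n + 5 / 2) * 2 ^ n) := by
  have h := sum_sqrt_add_le_card_mul (c := (2 * n + 3 / 2) * 2 ^ n) (2 ^ n)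
  push_cast at h
  rwa [dmcInner_succ, ← show (2 * n + 3 / 2) * 2 ^ n + 2 ^ n = (2 * n + 5 / 2) * (2 : ℝ) ^ n by ring]

theorem tendsto_dmcRatio : Tendsto dmcRatio atTop (𝓝 (1 / 2)) := by
  rw [← tendsto_add_atTop_iff_nat 1]
  refine tendsto_of_tendsto_of_tendsto_of_le_of_le
    (tendsto_pow_add_one_mul_sqrt_div (by norm_num : (0 : ℝ) ≤ 3 / 2))
    (tendsto_pow_add_one_mul_sqrt_div (by norm_num : (0 : ℝ) ≤ 5 / 2)) (fun n ↦ ?_) (fun n ↦ ?_)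
  all_goals
    simp only [dmcRatio, Nat.cast_add, Nat.cast_one]
    gcongr
  · exact pow_add_one_mul_sqrt_le_dmcInner_succ n
  · exact dmcInner_succ_le_pow_add_one_mul_sqrt n

theorem dmcRatio_nonneg (d : ℕ) : 0 ≤ dmcRatio d :=
  div_nonneg (sum_nonneg fun _ _ ↦ sqrt_nonneg _) (by positivity)

noncomputable def dmcTerm (m k : ℕ) : ℝ :=
  if k + 2 ≤ m then √(((m - k : ℕ) : ℝ) / m) * dmcRatio (m - k) else 0

theorem tendsto_dmcTerm (k : ℕ) : Tendsto (dmcTerm · k) atTop (𝓝 (1 / 2)) := by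
  rw [← tendsto_add_atTop_iff_nat k]
  have h := (tendsto_natCast_div_add_atTop (k : ℝ)).sqrt.mul tendsto_dmcRatio
  rw [sqrt_one, one_mul] at h
  refine h.congr' ?_
  filter_upwards [eventually_ge_atTop 2] with d hd
  simp only [dmcTerm, Nat.add_sub_cancel, Nat.cast_add]
  exact (if_pos (by omega)).symm

theorem exists_abs_dmcTerm_le : ∃ B, ∀ m k, |dmcTerm m k| ≤ B := by
  obtain ⟨B, hB⟩ := tendsto_dmcRatio.bddAbove_range
  have hratio (d : ℕ) : dmcRatio d ≤ B := hB (Set.mem_range_self d)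
  refine ⟨B, fun m k ↦ ?_⟩
  unfold dmcTerm
  split_ifs with hkm
  · have hsqrt : √(((m - k : ℕ) : ℝ) / m) ≤ 1 :=
      sqrt_le_one.mpr (div_le_one_of_le₀ (by exact_mod_cast m.sub_le k) m.cast_nonneg)
    rw [abs_of_nonneg (mul_nonneg (sqrt_nonneg _) (dmcRatio_nonneg _))]
    exact (mul_le_of_le_one_left (dmcRatio_nonneg _) hsqrt).trans (hratio _)
  · simpa using (dmcRatio_nonneg 0).trans (hratio 0)

theorem tsum_geometric_mul_dmcTerm (m : ℕ) :
    ∑' k, (√2 / 2) ^ k * dmcTerm m k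
      = (∑ d ∈ Icc 2 m, 2 ^ (m - d) * dmcInner d) / ((2 * √2) ^ m * √m) := by
  rw [tsum_eq_sum (s := range (m - 1)) fun k hk ↦ by
    rw [dmcTerm, if_neg (by simp only [mem_range] at hk; omega), mul_zero], sum_div]
  refine sum_nbij' (fun k ↦ m - k) (fun d ↦ m - d) ?_ ?_ ?_ ?_ fun k hk ↦ ?_
  · intro k hk; simp only [mem_range, mem_Icc] at hk ⊢; omega
  · intro d hd; simp only [mem_range, mem_Icc] at hd ⊢; omega
  · intro k hk; simp only [mem_range] at hk; omega
  · intro d hd; simp only [mem_Icc] at hd; omega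
  obtain ⟨d, rfl⟩ : ∃ d, m = d + k := ⟨m - k, by simp only [mem_range] at hk; omega⟩
  have hd : 2 ≤ d := by simp only [mem_range] at hk; omega
  rw [dmcTerm, if_pos (by omega), Nat.add_sub_cancel, Nat.add_sub_cancel_left,
    pow_mul_div_pow_add_mul_sqrt (by omega), dmcRatio]

/-- Asymptotics of the FFT divide/conquer-phase DMC sum: with
`S(m) = Σ_{d=2}^{m} 2^{m−d} · Σ_{a=0}^{2^{d−1}} √((2(d−1)+3/2)·2^{d−1} + a)`,
the ratio `S(m) / (2^{3m/2}·√m)` tends to `(2+√2)/2` as `m → ∞`. -/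
theorem fft_phase_dmc_asymptotic :
    Tendsto (fun m : ℕ =>
      (∑ d ∈ Finset.Icc 2 m, (2 : ℝ) ^ (m - d) *
          ∑ a ∈ Finset.range (2 ^ (d - 1) + 1),
            Real.sqrt ((2 * ((d : ℝ) - 1) + 3 / 2) * 2 ^ (d - 1) + (a : ℝ)))
        / ((2 : ℝ) ^ (3 * (m : ℝ) / 2) * Real.sqrt (m : ℝ)))
      atTop (nhds ((2 + Real.sqrt 2) / 2)) := by
  obtain ⟨B, hB⟩ := exists_abs_dmcTerm_le
  have h := tendsto_tsum_geometric_mul (by positivity) sqrt_two_div_two_lt_one tendsto_dmcTerm hB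
  rw [half_div_one_sub_sqrt_two_div_two] at h
  refine h.congr fun m ↦ ?_
  rw [tsum_geometric_mul_dmcTerm, two_rpow_three_mul_div_two, rpow_natCast]
  rfl
end

section
/- Let m > 1 and P > 0 be real numbers. Consider a portrait image with height h = m·w and h·w = P, a square image with height h' = w' and h'·w' = P, and a landscape image with width w'' = m·h'' and h''·w'' = P, all with positive dimensions. Then h'·(w')^{3/2} = m^{1/4}·h·w^{3/2} and h''·(w'')^{3/2} = m^{1/2}·h·w^{3/2}. In particular, with the same number of pixels, the dominant data movement term k^{3/2}·h·w^{3/2} of convolution is a factor of m^{1/4} larger for square images and m^{1/2} larger for landscape images than for portrait images of height-to-width ratio m. -/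
open Real

/-- Width/height asymmetry of convolution DMC: among a portrait image
(`h = m·w`), a square image (`h' = w'`), and a landscape image (`w'' = m·h''`)
all with the same number of pixels `P`, the dominant data-movement term
`h·w^{3/2}` is a factor `m^{1/4}` larger for the square image and `m^{1/2}`
larger for the landscape image than for the portrait image. -/
theorem dmc_conv_aspect_ratio_asymmetry
    (m P h w h' w' h'' w'' : ℝ)
    (hm : 1 < m) (hP : 0 < P)
    (hh : 0 < h) (hw : 0 < w) (hh' : 0 < h') (hw' : 0 < w')
    (hh'' : 0 < h'') (hw'' : 0 < w'')
    (hport : h = m * w) (hparea : h * w = P)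
    (hsq : h' = w') (hsarea : h' * w' = P)
    (hland : w'' = m * h'') (hlarea : h'' * w'' = P) :
    h' * w' ^ ((3 : ℝ) / 2) = m ^ ((1 : ℝ) / 4) * (h * w ^ ((3 : ℝ) / 2)) ∧
    h'' * w'' ^ ((3 : ℝ) / 2) = m ^ ((1 : ℝ) / 2) * (h * w ^ ((3 : ℝ) / 2)) := by
  have hm0 : (0 : ℝ) < m := lt_trans one_pos hm
  -- log facts
  have lh : Real.log h = Real.log m + Real.log w := by
    rw [hport, Real.log_mul hm0.ne' hw.ne']
  have lP1 : Real.log h + Real.log w = Real.log P := by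
    rw [← Real.log_mul hh.ne' hw.ne', hparea]
  have lsq : Real.log h' = Real.log w' := by rw [hsq]
  have lP2 : Real.log h' + Real.log w' = Real.log P := by
    rw [← Real.log_mul hh'.ne' hw'.ne', hsarea]
  have lland : Real.log w'' = Real.log m + Real.log h'' := by
    rw [hland, Real.log_mul hm0.ne' hh''.ne']
  have lP3 : Real.log h'' + Real.log w'' = Real.log P := by
    rw [← Real.log_mul hh''.ne' hw''.ne', hlarea]
  have key : ∀ a b : ℝ, 0 < a → 0 < b → Real.log a = Real.log b → a = b := by
    intro a b ha hb hab
    rw [← Real.exp_log ha, ← Real.exp_log hb, hab]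
  constructor
  · apply key
    · exact mul_pos hh' (Real.rpow_pos_of_pos hw' _)
    · exact mul_pos (Real.rpow_pos_of_pos hm0 _)
        (mul_pos hh (Real.rpow_pos_of_pos hw _))
    · rw [Real.log_mul hh'.ne' (Real.rpow_pos_of_pos hw' _).ne',
        Real.log_mul (Real.rpow_pos_of_pos hm0 _).ne'
          (mul_pos hh (Real.rpow_pos_of_pos hw _)).ne',
        Real.log_mul hh.ne' (Real.rpow_pos_of_pos hw _).ne',
        Real.log_rpow hw', Real.log_rpow hm0, Real.log_rpow hw]
      linarith
  · apply key
    · exact mul_pos hh'' (Real.rpow_pos_of_pos hw'' _)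
    · exact mul_pos (Real.rpow_pos_of_pos hm0 _)
        (mul_pos hh (Real.rpow_pos_of_pos hw _))
    · rw [Real.log_mul hh''.ne' (Real.rpow_pos_of_pos hw'' _).ne',
        Real.log_mul (Real.rpow_pos_of_pos hm0 _).ne'
          (mul_pos hh (Real.rpow_pos_of_pos hw _)).ne',
        Real.log_mul hh.ne' (Real.rpow_pos_of_pos hw _).ne',
        Real.log_rpow hw'', Real.log_rpow hm0, Real.log_rpow hw]
      linarith
end
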